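/- If smooth functions μ¹, μ², μ³ : ℝ³ → ℝ satisfy the two first-order partial differential equations ∂₃μ¹ − x₃·∂₃μ² − 3μ² = 0 and ∂₂μ¹ − x₃·∂₂μ² − x₃²·∂₁μ² + x₃·∂₁μ¹ + 2μ³ = 0 on ℝ³, then they also satisfy the additional first-order equation ∂₃μ³ + ∂₂μ² + (1/2)x₃·∂₁μ² + (1/2)∂₁μ¹ = 0. (The system formed by the first two equations is not formally integrable: prolongation produces the third equation.) -/

import Mathlib

/-- Partial derivative with respect to the `i`-th coordinate of `ℝⁿ`. -/
noncomputable def pd {n : ℕ} (i : Fin n) (f : (Fin n → ℝ) → ℝ) : (Fin n → ℝ) → ℝ :=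
  fun x => fderiv ℝ f x (Pi.single i 1)

section helpers

variable {n : ℕ}

lemma pd_contDiff (i : Fin n) {f : (Fin n → ℝ) → ℝ} (hf : ContDiff ℝ (⊤ : ℕ∞) f) :
    ContDiff ℝ (⊤ : ℕ∞) (pd i f) :=
  (hf.fderiv_right (by simp)).clm_apply contDiff_const

lemma pd_sub (i : Fin n) {f g : (Fin n → ℝ) → ℝ} {x : Fin n → ℝ}
    (hf : DifferentiableAt ℝ f x) (hg : DifferentiableAt ℝ g x) :
    pd i (fun y => f y - g y) x = pd i f x - pd i g x := by
  simp [pd, fderiv_fun_sub hf hg]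

lemma pd_add (i : Fin n) {f g : (Fin n → ℝ) → ℝ} {x : Fin n → ℝ}
    (hf : DifferentiableAt ℝ f x) (hg : DifferentiableAt ℝ g x) :
    pd i (fun y => f y + g y) x = pd i f x + pd i g x := by
  simp [pd, fderiv_fun_add hf hg]

lemma pd_mul (i : Fin n) {f g : (Fin n → ℝ) → ℝ} {x : Fin n → ℝ}
    (hf : DifferentiableAt ℝ f x) (hg : DifferentiableAt ℝ g x) :
    pd i (fun y => f y * g y) x = f x * pd i g x + g x * pd i f x := by
  simp [pd, fderiv_fun_mul hf hg]

lemma pd_const_mul (i : Fin n) (c : ℝ) {f : (Fin n → ℝ) → ℝ} {x : Fin n → ℝ}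
    (hf : DifferentiableAt ℝ f x) :
    pd i (fun y => c * f y) x = c * pd i f x := by
  simp [pd, fderiv_const_mul hf]

lemma coord_contDiff (j : Fin n) : ContDiff ℝ (⊤ : ℕ∞) (fun y : Fin n → ℝ => y j) :=
  (ContinuousLinearMap.proj j : (Fin n → ℝ) →L[ℝ] ℝ).contDiff

lemma pd_coord (i j : Fin n) (x : Fin n → ℝ) :
    pd i (fun y : Fin n → ℝ => y j) x = if j = i then 1 else 0 := by
  have : fderiv ℝ (fun y : Fin n → ℝ => y j) x
      = (ContinuousLinearMap.proj j : (Fin n → ℝ) →L[ℝ] ℝ) :=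
    (ContinuousLinearMap.proj j : (Fin n → ℝ) →L[ℝ] ℝ).fderiv
  simp [pd, this, Pi.single_apply]

lemma pd_comm {f : (Fin n → ℝ) → ℝ} (hf : ContDiff ℝ (⊤ : ℕ∞) f) (i j : Fin n) (x : Fin n → ℝ) :
    pd i (pd j f) x = pd j (pd i f) x := by
  have hder : DifferentiableAt ℝ (fderiv ℝ f) x :=
    ((hf.fderiv_right (m := (⊤:ℕ∞)) (by simp)).differentiable (by simp)) x
  have key : ∀ a b : Fin n, pd a (pd b f) x
      = fderiv ℝ (fderiv ℝ f) x (Pi.single a 1) (Pi.single b 1) := by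
    intro a b
    have h := fderiv_clm_apply (c := fderiv ℝ f) (u := fun _ => Pi.single b (1 : ℝ)) hder
      (differentiableAt_const _)
    have h2 : pd a (pd b f) x
        = fderiv ℝ (fun y => fderiv ℝ f y (Pi.single b 1)) x (Pi.single a 1) := rfl
    rw [h2, h]
    simp
  have hsymm := second_derivative_symmetric (f := f) (f' := fderiv ℝ f)
    (fun y => ((hf.differentiable (by simp)) y).hasFDerivAt) hder.hasFDerivAt
    (Pi.single i 1) (Pi.single j 1)
  rw [key, key]
  exact hsymm

lemma pd_of_eq_zero {f : (Fin n → ℝ) → ℝ} (h : ∀ y, f y = 0) (i : Fin n) (x : Fin n → ℝ) :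
    pd i f x = 0 := by
  have : f = fun _ => (0 : ℝ) := funext h
  simp [pd, this]

end helpers

/- Coordinates on `ℝ³` are `x 0, x 1, x 2` (the paper's `x¹, x², x³`),
so `x₃ = x 2`, `∂₁ = pd 0`, `∂₂ = pd 1`, `∂₃ = pd 2`. -/

/-- The system formed by `∂₃μ¹ − x₃∂₃μ² − 3μ² = 0` and
`∂₂μ¹ − x₃∂₂μ² − x₃²∂₁μ² + x₃∂₁μ¹ + 2μ³ = 0` is not formally integrable:
any smooth solution also satisfies the prolonged first-order equation
`∂₃μ³ + ∂₂μ² + (1/2)x₃∂₁μ² + (1/2)∂₁μ¹ = 0`. -/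
theorem prolongation_equation (μ1 μ2 μ3 : (Fin 3 → ℝ) → ℝ)
    (h1 : ContDiff ℝ (⊤ : ℕ∞) μ1) (h2 : ContDiff ℝ (⊤ : ℕ∞) μ2)
    (h3 : ContDiff ℝ (⊤ : ℕ∞) μ3)
    (e1 : ∀ x, pd 2 μ1 x - x 2 * pd 2 μ2 x - 3 * μ2 x = 0)
    (e2 : ∀ x, pd 1 μ1 x - x 2 * pd 1 μ2 x - (x 2) ^ 2 * pd 0 μ2 x
      + x 2 * pd 0 μ1 x + 2 * μ3 x = 0) :
    ∀ x, pd 2 μ3 x + pd 1 μ2 x + (1 / 2) * x 2 * pd 0 μ2 x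
      + (1 / 2) * pd 0 μ1 x = 0 := by
  intro x
  -- notation for differentiability
  have dc : ∀ (f : (Fin 3 → ℝ) → ℝ), ContDiff ℝ (⊤ : ℕ∞) f → DifferentiableAt ℝ f x :=
    fun f hf => (hf.differentiable (by simp)) x
  have hx2 : ContDiff ℝ (⊤ : ℕ∞) (fun y : Fin 3 → ℝ => y 2) := coord_contDiff 2
  have h1' : ∀ i, ContDiff ℝ (⊤ : ℕ∞) (pd i μ1) := fun i => pd_contDiff i h1
  have h2' : ∀ i, ContDiff ℝ (⊤ : ℕ∞) (pd i μ2) := fun i => pd_contDiff i h2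
  -- expand `pd j` of equation 1 for j = 0, 1
  have expand1 : ∀ j : Fin 3, pd j (fun y => y 2) x = 0 →
      pd j (pd 2 μ1) x - x 2 * pd j (pd 2 μ2) x - 3 * pd j μ2 x = 0 := by
    intro j hj
    have h0 : pd j (fun y => pd 2 μ1 y - y 2 * pd 2 μ2 y - 3 * μ2 y) x = 0 :=
      pd_of_eq_zero e1 j x
    rw [pd_sub j ((dc _ ((h1' 2))).fun_sub ((dc _ hx2).fun_mul (dc _ (h2' 2))))
        ((dc _ h2).const_mul 3),
      pd_sub j (dc _ (h1' 2)) ((dc _ hx2).fun_mul (dc _ (h2' 2))),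
      pd_mul j (dc _ hx2) (dc _ (h2' 2)),
      pd_const_mul j 3 (dc _ h2), hj] at h0
    linarith [h0]
  have hA := expand1 1 (by simp [pd_coord])
  have hB := expand1 0 (by simp [pd_coord])
  -- expand `pd 2` of equation 2
  have e2' : ∀ y : Fin 3 → ℝ, (pd 1 μ1 y - y 2 * pd 1 μ2 y - y 2 * (y 2 * pd 0 μ2 y)
      + y 2 * pd 0 μ1 y) + 2 * μ3 y = 0 := by
    intro y
    have := e2 y
    ring_nf at this ⊢
    linarith [this]
  have hC : pd 2 (pd 1 μ1) x - (x 2 * pd 2 (pd 1 μ2) x + pd 1 μ2 x * 1)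
      - (x 2 * (x 2 * pd 2 (pd 0 μ2) x + pd 0 μ2 x * 1) + (x 2 * pd 0 μ2 x) * 1)
      + (x 2 * pd 2 (pd 0 μ1) x + pd 0 μ1 x * 1) + 2 * pd 2 μ3 x = 0 := by
    have h0 : pd 2 (fun y => (pd 1 μ1 y - y 2 * pd 1 μ2 y - y 2 * (y 2 * pd 0 μ2 y)
        + y 2 * pd 0 μ1 y) + 2 * μ3 y) x = 0 := pd_of_eq_zero e2' 2 x
    have d11 := dc _ (h1' 1)
    have d12 := dc _ (h2' 1)
    have d02 := dc _ (h2' 0)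
    have d01 := dc _ (h1' 0)
    have dx2 := dc _ hx2
    have hcoord : pd 2 (fun y : Fin 3 → ℝ => y 2) x = 1 := by simp [pd_coord]
    rw [pd_add 2 (((d11.fun_sub (dx2.fun_mul d12)).fun_sub (dx2.fun_mul (dx2.fun_mul d02))).fun_add
        (dx2.fun_mul d01)) ((dc _ h3).const_mul 2),
      pd_add 2 ((d11.fun_sub (dx2.fun_mul d12)).fun_sub (dx2.fun_mul (dx2.fun_mul d02))) (dx2.fun_mul d01),
      pd_sub 2 (d11.fun_sub (dx2.fun_mul d12)) (dx2.fun_mul (dx2.fun_mul d02)),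
      pd_sub 2 d11 (dx2.fun_mul d12),
      pd_mul 2 dx2 d12,
      pd_mul 2 dx2 (dx2.fun_mul d02),
      pd_mul 2 dx2 d02,
      pd_mul 2 dx2 d01,
      pd_const_mul 2 2 (dc _ h3), hcoord] at h0
    linarith [h0]
  -- symmetry of second derivatives
  have s1 : pd 1 (pd 2 μ1) x = pd 2 (pd 1 μ1) x := pd_comm h1 1 2 x
  have s2 : pd 1 (pd 2 μ2) x = pd 2 (pd 1 μ2) x := pd_comm h2 1 2 x
  have s3 : pd 0 (pd 2 μ2) x = pd 2 (pd 0 μ2) x := pd_comm h2 0 2 x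
  have s4 : pd 0 (pd 2 μ1) x = pd 2 (pd 0 μ1) x := pd_comm h1 0 2 x
  rw [s1, s2] at hA
  rw [s3, s4] at hB
  linear_combination (1/2) * hC - (1/2) * hA - (x 2 / 2) * hB
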